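/- The operator R on M₂(F) defined by R = 0 on span(e₁₁, e₂₂, e₁₂+e₂₁) and R(e₁₂) = −e₁₁−e₁₂ is a Rota–Baxter operator of weight 1 on the Jordan algebra M₂(F)^(+), but is not a Rota–Baxter operator of weight 1 on the associative algebra M₂(F). -/

import Mathlib

def E (F : Type*) [Field F] (i j : Fin 2) : Matrix (Fin 2) (Fin 2) F :=
  Matrix.single i j 1

/-- The Jordan product on `M₂(F)`. -/
def jmul {F : Type*} [Field F] (a b : Matrix (Fin 2) (Fin 2) F) : Matrix (Fin 2) (Fin 2) F :=
  (2 : F)⁻¹ • (a * b + b * a)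

/-- On the basis, `R` is determined: `R x = (x₁₀ - x₀₁) • (e₁₁ + e₁₂)`. -/
theorem Rform_aux {F : Type*} [Field F]
    (R : Matrix (Fin 2) (Fin 2) F →ₗ[F] Matrix (Fin 2) (Fin 2) F)
    (hR0 : ∀ a ∈ Submodule.span F {E F 0 0, E F 1 1, E F 0 1 + E F 1 0}, R a = 0)
    (hR1 : R (E F 0 1) = -E F 0 0 - E F 0 1) (x : Matrix (Fin 2) (Fin 2) F) :
    R x = (x 1 0 - x 0 1) • (E F 0 0 + E F 0 1) := by
  have ha : x - (x 0 1 - x 1 0) • E F 0 1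
      = (x 0 0) • E F 0 0 + (x 1 1) • E F 1 1 + (x 1 0) • (E F 0 1 + E F 1 0) := by
    ext i j
    fin_cases i <;> fin_cases j <;>
      simp [E, Matrix.single]
  have hmem : x - (x 0 1 - x 1 0) • E F 0 1 ∈
      Submodule.span F {E F 0 0, E F 1 1, E F 0 1 + E F 1 0} := by
    rw [ha]
    refine Submodule.add_mem _ (Submodule.add_mem _ ?_ ?_) ?_ <;>
      refine Submodule.smul_mem _ _ (Submodule.subset_span ?_) <;> simp
  have h0 := hR0 _ hmem
  have h1 : R x - (x 0 1 - x 1 0) • R (E F 0 1) = 0 := by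
    rw [← map_smul, ← map_sub]; exact h0
  rw [hR1] at h1
  rw [sub_eq_zero.mp h1]
  ext i j
  fin_cases i <;> fin_cases j <;> simp [E, Matrix.single] <;> ring

theorem S2_operator_jordan_not_assoc {F : Type*} [Field F] (h2 : (2 : F) ≠ 0)
    (R : Matrix (Fin 2) (Fin 2) F →ₗ[F] Matrix (Fin 2) (Fin 2) F)
    (hR0 : ∀ a ∈ Submodule.span F {E F 0 0, E F 1 1, E F 0 1 + E F 1 0}, R a = 0)
    (hR1 : R (E F 0 1) = -E F 0 0 - E F 0 1) :
    (∀ x y : Matrix (Fin 2) (Fin 2) F,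
      jmul (R x) (R y) = R (jmul (R x) y + jmul x (R y) + jmul x y)) ∧
    ¬ (∀ x y : Matrix (Fin 2) (Fin 2) F,
        R x * R y = R (R x * y + x * R y + x * y)) := by
  have hf := Rform_aux R hR0 hR1
  constructor
  · intro x y
    rw [hf x, hf y, hf]
    ext i j
    fin_cases i <;> fin_cases j <;>
      · simp only [jmul, E, Matrix.add_apply, Matrix.smul_apply, Matrix.mul_apply,
          Fin.sum_univ_succ, Fin.sum_univ_zero, Matrix.single, Matrix.of_apply,
          smul_eq_mul, Fin.isValue]
        norm_num
        try field_simp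
        try ring
  · intro H
    have hxy := H (E F 1 0) (E F 0 1)
    rw [hf (E F 1 0), hf (E F 0 1), hf] at hxy
    have h00 := Matrix.ext_iff.mpr hxy 0 0
    simp only [E, Matrix.add_apply, Matrix.smul_apply, Matrix.mul_apply,
      Fin.sum_univ_succ, Fin.sum_univ_zero, Matrix.single, Matrix.of_apply,
      smul_eq_mul, Fin.isValue] at h00
    norm_num at h00
    exact one_ne_zero (by linear_combination -h00)
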